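/- Let d ≥ 1, let λ ∈ ℂ^d satisfy |λ_k| ≤ 1 for every k, and let R_1, R_2, … ∈ ℂ satisfy R_h = Σ_{k=1}^{d} (−1)^{k+1} e_k(λ) · R_{h−k} for every integer h ≥ d+1. Let η ≥ 0 and let R̂_1, …, R̂_{3d} ∈ ℂ satisfy max_{1 ≤ h ≤ 3d} |R̂_h − R_h| ≤ η. Let λ̂ ∈ ℂ^d satisfy |λ̂_k| ≤ 1 for every k and | Σ_{k=1}^{d} (−1)^{k+1} e_k(λ̂) · R̂_{h−k} − R̂_h | ≤ 2d·4^d·η for every d+1 ≤ h ≤ 3d. Define R̃_h := R̂_h for 1 ≤ h ≤ d and R̃_h := Σ_{k=1}^{d} (−1)^{k+1} e_k(λ̂) · R̃_{h−k} for h ≥ d+1. Then max_{1 ≤ h ≤ 3d} |R̃_h − R_h| ≤ 2d · (64e)^d · η. -/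

import Mathlib

/-!
Let `S` be the shift of sequences and `P = ∏ (X - λ̂ᵢ)`, so that the recurrence with
coefficients `(-1)^(k+1) e_k(λ̂)` reads `P(S) x = 0`. The error `u = R̃ - R̂` vanishes on
`[1, d]`, and since `R̃` satisfies the recurrence exactly, `P(S) u = -P(S) R̂` is the feasibility
residual, of size at most `B = 2d·4^d·η` on `[1, 2d]`. Removing the factors `S - a`, `‖a‖ ≤ 1`,
one at a time, zero initial values and Pascal's rule give `‖u h‖ ≤ B·C(h + 2d, d) ≤ 32^d B` for
`h ≤ 3d`. Adding `‖R̂ - R‖ ≤ η` and using `128^d + 1 ≤ (64e)^d` gives the claim.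
-/

open Finset

/-- The `k`-th elementary symmetric polynomial of `lam 1, …, lam d`. -/
noncomputable def esymm (d : ℕ) (lam : Fin d → ℂ) (k : ℕ) : ℂ :=
  ∑ S ∈ Finset.powersetCard k (Finset.univ : Finset (Fin d)), ∏ j ∈ S, lam j

open Polynomial

section Shift

variable (R : Type*) [CommSemiring R]

def seqShift : Module.End R (ℕ → R) := LinearMap.funLeft R R Nat.succ

variable {R}

theorem seqShift_pow_apply (k : ℕ) (u : ℕ → R) (h : ℕ) : (seqShift R ^ k) u h = u (h + k) := by
  induction k generalizing u with
  | zero => rfl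
  | succ k ih => rw [pow_succ, Module.End.mul_apply, ih]; rfl

theorem aeval_seqShift_apply_of_natDegree_lt {p : R[X]} {n : ℕ} (hp : p.natDegree < n)
    (u : ℕ → R) (h : ℕ) :
    aeval (seqShift R) p u h = ∑ k ∈ range n, p.coeff k * u (h + k) := by
  simp only [aeval_eq_sum_range' hp, LinearMap.sum_apply, LinearMap.smul_apply, Finset.sum_apply,
    Pi.smul_apply, smul_eq_mul, seqShift_pow_apply]

end Shift

theorem aeval_seqShift_X_sub_C_apply {R : Type*} [CommRing R] (a : R) (u : ℕ → R) (h : ℕ) :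
    aeval (seqShift R) (X - C a) u h = u (h + 1) - a * u h := by
  simp [seqShift]

theorem coeff_prod_X_sub_C_eq_esymm (d : ℕ) (lam : Fin d → ℂ) {k : ℕ} (hk : k ≤ d) :
    (∏ i, (X - C (lam i))).coeff k = (-1) ^ (d - k) * esymm d lam (d - k) := by
  have := Multiset.prod_X_sub_C_coeff (univ.val.map lam) (k := k) (by simpa using hk)
  rwa [Multiset.map_map, Finset.esymm_map_val, Multiset.card_map, card_val, card_univ,
    Fintype.card_fin] at this

theorem aeval_seqShift_prod_X_sub_C_apply (d : ℕ) (lam : Fin d → ℂ) (x : ℕ → ℂ) (m : ℕ) :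
    aeval (seqShift ℂ) (∏ i, (X - C (lam i))) x m =
      x (m + d) - ∑ k ∈ Icc 1 d, (-1 : ℂ) ^ (k + 1) * esymm d lam k * x (m + d - k) := by
  have hdeg : (∏ i, (X - C (lam i))).natDegree < d + 1 := by simp
  rw [aeval_seqShift_apply_of_natDegree_lt hdeg, ← sum_range_reflect]
  calc ∑ k ∈ range (d + 1),
        (∏ i, (X - C (lam i))).coeff (d + 1 - 1 - k) * x (m + (d + 1 - 1 - k))
      = ∑ k ∈ range (d + 1), (-1 : ℂ) ^ k * esymm d lam k * x (m + d - k) := by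
        refine sum_congr rfl fun k hk => ?_
        have hk : k ≤ d := Nat.lt_succ_iff.mp (mem_range.mp hk)
        rw [coeff_prod_X_sub_C_eq_esymm d lam (by omega), Nat.add_sub_cancel, Nat.sub_sub_self hk,
          Nat.add_sub_assoc hk]
    _ = x (m + d) - ∑ k ∈ Icc 1 d, (-1 : ℂ) ^ (k + 1) * esymm d lam k * x (m + d - k) := by
        rw [range_eq_Ico, sum_eq_sum_Ico_succ_bot d.succ_pos, zero_add, Nat.succ_eq_add_one,
          Ico_add_one_right_eq_Icc, sub_eq_add_neg, ← sum_neg_distrib]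
        simp [esymm, pow_succ]

section Bound

variable {𝕜 : Type*} [SeminormedCommRing 𝕜]

theorem norm_le_mul_choose_succ_of_sub_mul {v w : ℕ → 𝕜} {a : 𝕜} {B : ℝ} {n i N : ℕ}
    (ha : ‖a‖ ≤ 1) (hB : 0 ≤ B) (hv : v 1 = 0) (hvw : ∀ h, w h = v (h + 1) - a * v h)
    (hw : ∀ h, 1 ≤ h → h ≤ N → ‖w h‖ ≤ B * (h + n).choose i) :
    ∀ h, 1 ≤ h → h ≤ N + 1 → ‖v h‖ ≤ B * (h + n).choose (i + 1) := by
  intro h h1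
  induction h, h1 using Nat.le_induction with
  | base => intro _; rw [hv, norm_zero]; positivity
  | succ h h1 ih =>
    intro hN
    calc ‖v (h + 1)‖ = ‖w h + a * v h‖ := by rw [hvw, sub_add_cancel]
      _ ≤ ‖w h‖ + ‖v h‖ := by
        refine (norm_add_le _ _).trans (add_le_add_right ?_ _)
        exact (norm_mul_le _ _).trans (mul_le_of_le_one_left (norm_nonneg _) ha)
      _ ≤ B * (h + n).choose i + B * (h + n).choose (i + 1) :=
        add_le_add (hw h h1 (by omega)) (ih (by omega))
      _ = B * (h + 1 + n).choose (i + 1) := by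
        rw [Nat.add_right_comm, Nat.choose_succ_succ', Nat.cast_add]; ring

theorem norm_le_mul_choose_of_aeval_prod (s : Multiset 𝕜) (hs : ∀ a ∈ s, ‖a‖ ≤ 1)
    {u : ℕ → 𝕜} (hu : ∀ h, 1 ≤ h → h ≤ Multiset.card s → u h = 0) {B : ℝ} (hB : 0 ≤ B) {n : ℕ}
    (hP : ∀ m, 1 ≤ m → m ≤ n → ‖aeval (seqShift 𝕜) (s.map (X - C ·)).prod u m‖ ≤ B) :
    ∀ h, 1 ≤ h → h ≤ n + Multiset.card s → ‖u h‖ ≤ B * (h + n).choose (Multiset.card s) := by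
  induction s using Multiset.induction_on generalizing u with
  | empty => simpa using hP
  | cons a t ih =>
    have hu' : ∀ h, 1 ≤ h → h ≤ Multiset.card t + 1 → u h = 0 := by simpa using hu
    have hw0 : ∀ h, 1 ≤ h → h ≤ Multiset.card t → aeval (seqShift 𝕜) (X - C a) u h = 0 := by
      intro h h1 ht
      rw [aeval_seqShift_X_sub_C_apply, hu' h h1 (by omega), hu' (h + 1) (by omega) (by omega),
        mul_zero, sub_zero]
    have hwP : aeval (seqShift 𝕜) (t.map (X - C ·)).prod (aeval (seqShift 𝕜) (X - C a) u) =
        aeval (seqShift 𝕜) ((a ::ₘ t).map (X - C ·)).prod u := by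
      rw [Multiset.map_cons, Multiset.prod_cons, mul_comm, map_mul, Module.End.mul_apply]
    have hw := ih (fun b hb => hs b (Multiset.mem_cons_of_mem hb)) hw0 (hwP ▸ hP)
    rw [Multiset.card_cons]
    exact norm_le_mul_choose_succ_of_sub_mul (hs a (Multiset.mem_cons_self a t)) hB
      (hu' 1 le_rfl (by omega)) (fun h => aeval_seqShift_X_sub_C_apply a u h) hw

end Bound

theorem choose_add_two_mul_le_thirty_two_pow {h d : ℕ} (hh : h ≤ 3 * d) :
    (h + 2 * d).choose d ≤ 32 ^ d :=
  calc (h + 2 * d).choose d ≤ (5 * d).choose d := Nat.choose_le_choose d (by omega)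
    _ ≤ 2 ^ (5 * d) := Nat.choose_le_two_pow _ _
    _ = 32 ^ d := by rw [pow_mul]; norm_num

theorem pow_add_one_le_sixty_four_mul_exp_pow {d : ℕ} (hd : d ≠ 0) :
    (128 : ℝ) ^ d + 1 ≤ (64 * Real.exp 1) ^ d :=
  calc (128 : ℝ) ^ d + 1 = 128 ^ d + 1 ^ d := by rw [one_pow]
    _ ≤ (128 + 1) ^ d := pow_add_pow_le (by norm_num) zero_le_one hd
    _ ≤ (64 * Real.exp 1) ^ d :=
      pow_le_pow_left₀ (by norm_num) (by linarith [Real.exp_one_gt_d9]) d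

theorem extrapolation_initial_error_bound_general (d : ℕ) (R : ℕ → ℂ)
    (η : ℝ) (hη : 0 ≤ η) (Rh : ℕ → ℂ)
    (hRh : ∀ h : ℕ, 1 ≤ h → h ≤ 3 * d → ‖Rh h - R h‖ ≤ η)
    (lamh : Fin d → ℂ) (hlamh : ∀ k, ‖lamh k‖ ≤ 1)
    (hfeas : ∀ h : ℕ, d + 1 ≤ h → h ≤ 3 * d →
      ‖(∑ k ∈ Finset.Icc 1 d, (-1 : ℂ) ^ (k + 1) * esymm d lamh k * Rh (h - k)) -
            Rh h‖ ≤
        2 * (d : ℝ) * 4 ^ d * η)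
    (Rt : ℕ → ℂ)
    (hRt1 : ∀ h : ℕ, 1 ≤ h → h ≤ d → Rt h = Rh h)
    (hRt2 : ∀ h : ℕ, d + 1 ≤ h →
      Rt h = ∑ k ∈ Finset.Icc 1 d, (-1 : ℂ) ^ (k + 1) * esymm d lamh k * Rt (h - k)) :
    ∀ h : ℕ, 1 ≤ h → h ≤ 3 * d →
      ‖Rt h - R h‖ ≤ 2 * (d : ℝ) * (64 * Real.exp 1) ^ d * η := by
  intro h h1 h3
  set B : ℝ := 2 * d * 4 ^ d * η
  set s : Multiset ℂ := univ.val.map lamh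
  have hcard : Multiset.card s = d := by simp [s]
  have hP : ∀ m, 1 ≤ m → m ≤ 2 * d →
      ‖aeval (seqShift ℂ) (s.map (X - C ·)).prod (Rt - Rh) m‖ ≤ B := fun m hm1 hm2 => by
    have hprod : (s.map (X - C ·)).prod = ∏ i, (X - C (lamh i)) := by rw [Multiset.map_map]; rfl
    rw [hprod, map_sub, Pi.sub_apply, aeval_seqShift_prod_X_sub_C_apply,
      aeval_seqShift_prod_X_sub_C_apply, ← hRt2 (m + d) (by omega), sub_self, zero_sub, norm_neg,
      norm_sub_rev]
    exact hfeas (m + d) (by omega) (by omega)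
  have hu := norm_le_mul_choose_of_aeval_prod s (by simpa [s] using hlamh) (u := Rt - Rh)
    (fun k hk1 hkd => sub_eq_zero.mpr (hRt1 k hk1 (hcard ▸ hkd))) (by positivity) hP h h1 (by omega)
  rw [hcard] at hu
  have hchoose : ((h + 2 * d).choose d : ℝ) ≤ 32 ^ d := by
    exact_mod_cast choose_add_two_mul_le_thirty_two_pow h3
  have hd : (1 : ℝ) ≤ d := by exact_mod_cast (by omega : 1 ≤ d)
  calc ‖Rt h - R h‖ ≤ ‖Rt h - Rh h‖ + ‖Rh h - R h‖ := norm_sub_le_norm_sub_add_norm_sub _ _ _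
    _ ≤ B * 32 ^ d + η := add_le_add (hu.trans (by gcongr)) (hRh h h1 h3)
    _ ≤ 2 * d * (128 ^ d + 1) * η := by
      rw [show (128 : ℝ) ^ d = 4 ^ d * 32 ^ d by rw [← mul_pow]; norm_num]; nlinarith
    _ ≤ 2 * d * (64 * Real.exp 1) ^ d * η := by
      gcongr; exact pow_add_one_le_sixty_four_mul_exp_pow (by omega)

/-- Part (b) of Lemma C.4 (initial-conditions lemma): any eigenvalue vector `λ̂`
feasible for the optimization problem yields extrapolated values `R̃` that approximate
the true sequence `R` on the first `3d` steps. -/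
theorem extrapolation_initial_error_bound (d : ℕ) (hd : 1 ≤ d) (lam : Fin d → ℂ)
    (hlam : ∀ k, ‖lam k‖ ≤ 1) (R : ℕ → ℂ)
    (hR : ∀ h : ℕ, d + 1 ≤ h →
      R h = ∑ k ∈ Finset.Icc 1 d, (-1 : ℂ) ^ (k + 1) * esymm d lam k * R (h - k))
    (η : ℝ) (hη : 0 ≤ η) (Rh : ℕ → ℂ)
    (hRh : ∀ h : ℕ, 1 ≤ h → h ≤ 3 * d → ‖Rh h - R h‖ ≤ η)
    (lamh : Fin d → ℂ) (hlamh : ∀ k, ‖lamh k‖ ≤ 1)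
    (hfeas : ∀ h : ℕ, d + 1 ≤ h → h ≤ 3 * d →
      ‖(∑ k ∈ Finset.Icc 1 d, (-1 : ℂ) ^ (k + 1) * esymm d lamh k * Rh (h - k)) -
            Rh h‖ ≤
        2 * (d : ℝ) * 4 ^ d * η)
    (Rt : ℕ → ℂ)
    (hRt1 : ∀ h : ℕ, 1 ≤ h → h ≤ d → Rt h = Rh h)
    (hRt2 : ∀ h : ℕ, d + 1 ≤ h →
      Rt h = ∑ k ∈ Finset.Icc 1 d, (-1 : ℂ) ^ (k + 1) * esymm d lamh k * Rt (h - k)) :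
    ∀ h : ℕ, 1 ≤ h → h ≤ 3 * d →
      ‖Rt h - R h‖ ≤ 2 * (d : ℝ) * (64 * Real.exp 1) ^ d * η :=
  extrapolation_initial_error_bound_general d R η hη Rh hRh lamh hlamh hfeas Rt hRt1 hRt2
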